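/- For independent uniform X₁,…,X_t on a finite set Σ, X = (X₁,…,X_t), and a randomized mapping f with I(f(X):X) ≤ C·t·log t, the average over uniform j∈[t] and x∈Σ of d(f(X|_{X_j≠x}), f(X|_{X_j=x})) is at most 1 − e^{−1−C log t} + 1/|Σ|. -/

import Mathlib

open Finset

/-- Statistical distance: half the ℓ1-distance of probability mass functions. -/
noncomputable def statDist {Ω : Type*} [Fintype Ω] (p q : Ω → ℝ) : ℝ :=
  (1 / 2) * ∑ ω, |p ω - q ω|

/-- Shannon entropy (in bits) of a probability mass function. -/
noncomputable def entropyOf {α : Type*} [Fintype α] (p : α → ℝ) : ℝ :=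
  ∑ a, -(p a * Real.logb 2 (p a))

section

variable {σ W R : Type*} [Fintype σ] [Fintype W] [Fintype R]
  [DecidableEq σ] [DecidableEq W] {t : ℕ}

/-- The distribution of `f(X)` where `X = (X₁,…,X_t)` is a vector of independent
uniform variables on `σ` and `f` is a randomized mapping with uniform seed. -/
noncomputable def outDist (f : (Fin t → σ) → R → W) (z : W) : ℝ :=
  ∑ a : Fin t → σ, ∑ r,
    ((1 : ℝ) / (Fintype.card σ : ℝ)) ^ t * (1 / (Fintype.card R : ℝ)) *
      (if f a r = z then 1 else 0)

/-- The joint distribution of `(f(X), X)`. -/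
noncomputable def jointDist (f : (Fin t → σ) → R → W) (za : W × (Fin t → σ)) : ℝ :=
  ∑ r, ((1 : ℝ) / (Fintype.card σ : ℝ)) ^ t * (1 / (Fintype.card R : ℝ)) *
    (if f za.2 r = za.1 then 1 else 0)

/-- The mutual information `I(f(X) : X)` (in bits). -/
noncomputable def miOut (f : (Fin t → σ) → R → W) : ℝ :=
  entropyOf (outDist f)
    + entropyOf (fun _ : Fin t → σ => ((1 : ℝ) / (Fintype.card σ : ℝ)) ^ t)
    - entropyOf (jointDist f)

/-- The distribution of `f(X|_{X_j = x})`: the `j`-th coordinate fixed to `x`. -/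
noncomputable def eqDist (f : (Fin t → σ) → R → W) (j : Fin t) (x : σ) (z : W) : ℝ :=
  ∑ a : Fin t → σ, ∑ r,
    (if a j = x then ((1 : ℝ) / (Fintype.card σ : ℝ)) ^ (t - 1) else 0) *
      (1 / (Fintype.card R : ℝ)) * (if f a r = z then 1 else 0)

/-- The distribution of `f(X|_{X_j ≠ x})`: the `j`-th coordinate resampled
uniformly from `σ ∖ {x}`. -/
noncomputable def neDist (f : (Fin t → σ) → R → W) (j : Fin t) (x : σ) (z : W) : ℝ :=
  ∑ a : Fin t → σ, ∑ r,
    (if a j = x then 0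
      else (1 / ((Fintype.card σ : ℝ) - 1)) * ((1 : ℝ) / (Fintype.card σ : ℝ)) ^ (t - 1)) *
      (1 / (Fintype.card R : ℝ)) * (if f a r = z then 1 else 0)

end

/-!
Write `P` for the law of `f(X)`, `P_{j,x}` for that of `f(X|_{X_j=x})` and `P'_{j,x}` for that of
`f(X|_{X_j≠x})`. Since `X_j` is uniform, `|σ| P = (|σ| - 1) P'_{j,x} + P_{j,x}`, so
`d(P'_{j,x}, P) = d(P'_{j,x}, P_{j,x}) / |σ| ≤ 1 / |σ|`, while Vajda's inequality gives
`d(P_{j,x}, P) ≤ 1 - exp(-1 - KL(P_{j,x} ‖ P))`. The average over `x` of `KL(P_{j,x} ‖ P)` is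
`I(f(X) : X_j)`, and because the `X_j` are independent, `∑ⱼ I(f(X) : X_j) ≤ I(f(X) : X)`
(Gibbs' inequality against the product of the marginals). Hence the average KL divergence is at most
`C log t`, and concavity of `y ↦ 1 - exp(-1 - y)` finishes the argument.
-/

open Real
open scoped BigOperators

/-- Kullback–Leibler divergence in nats. As `log 0 = 0` in Mathlib, it is the true divergence only
when `q z = 0 → p z = 0`. -/
noncomputable def relEntropy {Ω : Type*} [Fintype Ω] (p q : Ω → ℝ) : ℝ :=
  ∑ z, p z * log (p z / q z)

lemma sub_le_mul_log_div {c q : ℝ} (hc : 0 ≤ c) (hq : 0 < q) : c - q ≤ c * log (c / q) := by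
  have h := mul_le_mul_of_nonneg_left (self_sub_one_le_mul_log (div_nonneg hc hq.le)) hq.le
  rwa [mul_sub, mul_div_cancel₀ _ hq.ne', mul_one, ← mul_assoc, mul_div_cancel₀ _ hq.ne'] at h

lemma mul_log_div_div {c u K : ℝ} (hc : 0 ≤ c) (hcu : c ≤ u) (hK : 0 < K) :
    c * log (c / (u / K)) = c * log c - c * log u + c * log K := by
  rcases hc.eq_or_lt with hc | hc
  · simp [← hc]
  have hu := hc.trans_le hcu
  rw [log_div hc.ne' (by positivity), log_div hu.ne' hK.ne']
  ring

lemma log_two_mul_entropyOf {α : Type*} [Fintype α] (p : α → ℝ) :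
    log 2 * entropyOf p = -∑ a, p a * log (p a) := by
  have h2 : log 2 ≠ 0 := (log_pos one_lt_two).ne'
  simp only [entropyOf, logb, mul_sum, ← sum_neg_distrib]
  exact sum_congr rfl fun a _ => by field_simp

lemma mul_one_div_pow_eq {k : ℝ} (hk : k ≠ 0) {n : ℕ} (hn : 0 < n) :
    k * (1 / k) ^ n = (1 / k) ^ (n - 1) := by
  rw [← mul_pow_sub_one hn.ne' (1 / k), ← mul_assoc, mul_one_div_cancel hk, one_mul]

lemma sum_sub_sum_le_relEntropy {Ω : Type*} [Fintype Ω] {p q : Ω → ℝ} (hp : ∀ z, 0 ≤ p z)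
    (hq : ∀ z, 0 ≤ q z) (hpq : ∀ z, q z = 0 → p z = 0) :
    ∑ z, p z - ∑ z, q z ≤ relEntropy p q := by
  rw [← sum_sub_distrib]
  refine sum_le_sum fun z _ => ?_
  rcases (hq z).eq_or_lt with hz | hz
  · simp [← hz, hpq z hz.symm]
  · exact sub_le_mul_log_div (hp z) hz

section StatDist

variable {Ω : Type*} [Fintype Ω] {p q : Ω → ℝ}

lemma statDist_comm (p q : Ω → ℝ) : statDist p q = statDist q p := by
  simp only [statDist, abs_sub_comm]

lemma statDist_triangle (p q r : Ω → ℝ) : statDist p r ≤ statDist p q + statDist q r := by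
  simp only [statDist, ← mul_add, ← sum_add_distrib]
  gcongr with z
  exact abs_sub_le _ _ _

lemma statDist_le_one (hp : ∀ z, 0 ≤ p z) (hq : ∀ z, 0 ≤ q z) (hp1 : ∑ z, p z = 1)
    (hq1 : ∑ z, q z = 1) : statDist p q ≤ 1 := by
  have h : ∑ z, |p z - q z| ≤ ∑ z, (p z + q z) :=
    sum_le_sum fun z _ =>
      (abs_sub _ _).trans_eq (by rw [abs_of_nonneg (hp z), abs_of_nonneg (hq z)])
  rw [sum_add_distrib, hp1, hq1] at h
  rw [statDist]
  linarith

lemma statDist_eq_one_sub_sum_min (hp1 : ∑ z, p z = 1) (hq1 : ∑ z, q z = 1) :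
    statDist p q = 1 - ∑ z, min (p z) (q z) := by
  have h : ∀ z, |p z - q z| = p z + q z - 2 * min (p z) (q z) := fun z => by
    rcases le_total (p z) (q z) with hz | hz
    · rw [abs_of_nonpos (sub_nonpos.2 hz), min_eq_left hz]; ring
    · rw [abs_of_nonneg (sub_nonneg.2 hz), min_eq_right hz]; ring
  simp only [statDist, h, sum_sub_distrib, sum_add_distrib, ← mul_sum, hp1, hq1]
  ring

lemma exp_neg_one_sub_relEntropy_le_sum_min (hp : ∀ z, 0 ≤ p z) (hq : ∀ z, 0 ≤ q z)
    (hp1 : ∑ z, p z = 1) (hq1 : ∑ z, q z = 1) (hpq : ∀ z, q z = 0 → p z = 0) :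
    exp (-1 - relEntropy p q) ≤ ∑ z, min (p z) (q z) := by
  have hpos : ∀ z, p z ≠ 0 → 0 < p z ∧ 0 < q z := fun z hz =>
    ⟨(hp z).lt_of_ne' hz, (hq z).lt_of_ne' fun h => hz (hpq z h)⟩
  have hterm : ∀ z, -(p z * log (p z / q z)) - q z ≤ p z * log (min (p z) (q z) / p z) := by
    intro z
    by_cases hz : p z = 0
    · simp [hz, hq z]
    obtain ⟨hpz, hqz⟩ := hpos z hz
    rcases le_total (p z) (q z) with hle | hle
    · rw [min_eq_left hle, div_self hz, log_one, mul_zero]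
      linarith [sub_le_mul_log_div hpz.le hqz]
    · rw [min_eq_right hle, ← inv_div, log_inv]
      linarith
  have hexponent : -1 - relEntropy p q ≤ ∑ z, p z * log (min (p z) (q z) / p z) := by
    have := sum_le_sum fun z (_ : z ∈ univ) => hterm z
    rw [sum_sub_distrib, sum_neg_distrib, hq1] at this
    exact (le_of_eq (by rw [relEntropy]; ring)).trans this
  have hmin : ∀ z, p z * exp (log (min (p z) (q z) / p z)) ≤ min (p z) (q z) := by
    intro z
    by_cases hz : p z = 0
    · simp [hz, hq z]
    obtain ⟨hpz, hqz⟩ := hpos z hz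
    rw [exp_log (div_pos (lt_min hpz hqz) hpz), mul_div_cancel₀ _ hz]
  calc exp (-1 - relEntropy p q)
      ≤ exp (∑ z, p z * log (min (p z) (q z) / p z)) := exp_le_exp.2 hexponent
    _ ≤ ∑ z, p z * exp (log (min (p z) (q z) / p z)) :=
        convexOn_exp.map_sum_le (fun z _ => hp z) hp1 (fun _ _ => Set.mem_univ _)
    _ ≤ ∑ z, min (p z) (q z) := sum_le_sum fun z _ => hmin z

lemma statDist_le_one_sub_exp_relEntropy (hp : ∀ z, 0 ≤ p z) (hq : ∀ z, 0 ≤ q z)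
    (hp1 : ∑ z, p z = 1) (hq1 : ∑ z, q z = 1) (hpq : ∀ z, q z = 0 → p z = 0) :
    statDist p q ≤ 1 - exp (-1 - relEntropy p q) := by
  rw [statDist_eq_one_sub_sum_min hp1 hq1]
  linarith [exp_neg_one_sub_relEntropy_le_sum_min hp hq hp1 hq1 hpq]

end StatDist

lemma exp_expect_le {ι : Type*} [Fintype ι] [Nonempty ι] (g : ι → ℝ) :
    exp (𝔼 i, g i) ≤ 𝔼 i, exp (g i) := by
  have hcard : (0 : ℝ) < Fintype.card ι := Nat.cast_pos.2 Fintype.card_pos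
  have h := convexOn_exp.map_sum_le (t := univ) (w := fun _ => 1 / (Fintype.card ι : ℝ)) (p := g)
    (fun _ _ => by positivity) (by simp [hcard.ne']) (fun _ _ => Set.mem_univ _)
  simpa only [Fintype.expect_eq_sum_div_card, smul_eq_mul, ← mul_sum, one_div_mul_eq_div,
    sum_div] using h

lemma expect_one_sub_exp_le {ι : Type*} [Fintype ι] [Nonempty ι] (D : ι → ℝ) :
    𝔼 i, (1 - exp (-1 - D i)) ≤ 1 - exp (-1 - 𝔼 i, D i) := by
  have h := exp_expect_le fun i => -1 - D i
  simp only [expect_sub_distrib, Fintype.expect_const] at h ⊢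
  linarith

section Marginal

variable {ι σ : Type*} [Fintype ι] [DecidableEq ι] [Fintype σ] [DecidableEq σ]

noncomputable def marginal (c : (ι → σ) → ℝ) (j : ι) (x : σ) : ℝ :=
  ∑ a with a j = x, c a

lemma sum_marginal (c : (ι → σ) → ℝ) (j : ι) : ∑ x, marginal c j x = ∑ a, c a := by
  simp only [marginal]
  exact sum_fiberwise univ (fun a => a j) c

lemma sum_marginal_mul (c : (ι → σ) → ℝ) (j : ι) (ψ : σ → ℝ) :
    ∑ x, marginal c j x * ψ x = ∑ a, c a * ψ (a j) := by
  rw [← sum_fiberwise univ (fun a => a j) (fun a => c a * ψ (a j))]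
  refine sum_congr rfl fun x _ => ?_
  rw [marginal, sum_mul]
  exact sum_congr rfl fun a ha => by rw [(mem_filter.1 ha).2]

lemma sum_mul_prod_marginal_div [Nonempty σ] (c : (ι → σ) → ℝ) :
    ∑ a : ι → σ, (∑ b, c b) / Fintype.card σ ^ Fintype.card ι
      * ∏ j, marginal c j (a j) / ((∑ b, c b) / Fintype.card σ) = ∑ b, c b := by
  have hk : (Fintype.card σ : ℝ) ≠ 0 := Nat.cast_ne_zero.2 Fintype.card_ne_zero
  rw [← mul_sum,
    ← Fintype.prod_sum fun j x => marginal c j x / ((∑ b, c b) / Fintype.card σ)]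
  simp only [← sum_div, sum_marginal, prod_const, card_univ]
  by_cases hu : ∑ b, c b = 0
  · simp [hu]
  · field_simp

lemma le_marginal {c : (ι → σ) → ℝ} (hc : ∀ a, 0 ≤ c a) (a : ι → σ) (j : ι) :
    c a ≤ marginal c j (a j) :=
  single_le_sum (fun b _ => hc b) (mem_filter.2 ⟨mem_univ a, rfl⟩)

theorem sum_relEntropy_marginal_le [Nonempty σ] {c : (ι → σ) → ℝ} (hc : ∀ a, 0 ≤ c a) :
    ∑ j, relEntropy (marginal c j) (fun _ => (∑ a, c a) / Fintype.card σ)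
      ≤ relEntropy c (fun _ => (∑ a, c a) / Fintype.card σ ^ Fintype.card ι) := by
  set u := ∑ a, c a
  set k : ℝ := (Fintype.card σ : ℝ)
  have hk : 0 < k := Nat.cast_pos.2 Fintype.card_pos
  have hu : 0 ≤ u := sum_nonneg fun a _ => hc a
  have hm : ∀ j x, 0 ≤ marginal c j x := fun j x => sum_nonneg fun a _ => hc a
  have hpos : ∀ a, c a ≠ 0 → 0 < u ∧ ∀ j, 0 < marginal c j (a j) := fun a ha =>
    have hca := (hc a).lt_of_ne' ha
    ⟨hca.trans_le (single_le_sum (fun b _ => hc b) (mem_univ a)),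
      fun j => hca.trans_le (le_marginal hc a j)⟩
  -- `Q` is the product of the marginals, rescaled to total mass `u`
  set Q : (ι → σ) → ℝ :=
    fun a => u / k ^ Fintype.card ι * ∏ j, (marginal c j (a j) / (u / k))
  have hQ : ∀ a, 0 ≤ Q a := fun a =>
    mul_nonneg (by positivity) (prod_nonneg fun j _ => div_nonneg (hm j _) (by positivity))
  have hcQ : ∀ a, Q a = 0 → c a = 0 := fun a hQa => by
    by_contra ha
    obtain ⟨hu, hmj⟩ := hpos a ha
    exact (mul_pos (by positivity) (prod_pos fun j _ => div_pos (hmj j) (by positivity))).ne' hQa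
  have hlog : ∀ a, c a * log (c a / Q a) = c a * log (c a / (u / k ^ Fintype.card ι))
      - ∑ j, c a * log (marginal c j (a j) / (u / k)) := by
    intro a
    by_cases ha : c a = 0
    · simp [ha]
    obtain ⟨hu, hmj⟩ := hpos a ha
    have hprod : ∀ j ∈ univ, marginal c j (a j) / (u / k) ≠ 0 :=
      fun j _ => (div_pos (hmj j) (by positivity)).ne'
    rw [← mul_sum, ← mul_sub, div_mul_eq_div_div,
      log_div (by positivity) (prod_ne_zero_iff.2 hprod), log_prod hprod]
  have hmarg : ∀ j, ∑ a, c a * log (marginal c j (a j) / (u / k))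
      = relEntropy (marginal c j) fun _ => u / k := fun j =>
    (sum_marginal_mul c j fun x => log (marginal c j x / (u / k))).symm
  have hgibbs := sum_sub_sum_le_relEntropy hc hQ hcQ
  rw [sum_mul_prod_marginal_div, sub_self, relEntropy, sum_congr rfl fun a _ => hlog a,
    sum_sub_distrib, sum_comm, sum_congr rfl fun j _ => hmarg j, sub_nonneg] at hgibbs
  exact hgibbs

end Marginal

section

variable {σ W R : Type*} [Fintype σ] [Fintype R] [DecidableEq W] {t : ℕ}
  (f : (Fin t → σ) → R → W)

lemma jointDist_nonneg (z : W) (a : Fin t → σ) : 0 ≤ jointDist f (z, a) := by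
  unfold jointDist
  positivity

lemma sum_jointDist [Fintype W] [Nonempty R] (a : Fin t → σ) :
    ∑ z, jointDist f (z, a) = (1 / (Fintype.card σ : ℝ)) ^ t := by
  have hR : (Fintype.card R : ℝ) ≠ 0 := Nat.cast_ne_zero.2 Fintype.card_ne_zero
  simp only [jointDist, sum_comm (γ := W), ← mul_sum, sum_ite_eq, mem_univ, if_true, mul_one,
    sum_const, card_univ, nsmul_eq_mul]
  field_simp

lemma outDist_eq_sum_jointDist (z : W) : outDist f z = ∑ a, jointDist f (z, a) := rfl

lemma eqDist_eq_sum [DecidableEq σ] (ht : 0 < t) (j : Fin t) (x : σ) (z : W) :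
    eqDist f j x z
      = ∑ a, (if a j = x then (Fintype.card σ : ℝ) else 0) * jointDist f (z, a) := by
  have hk : (Fintype.card σ : ℝ) ≠ 0 := Nat.cast_ne_zero.2 (Fintype.card_pos_iff.2 ⟨x⟩).ne'
  simp only [eqDist, jointDist, mul_sum]
  refine sum_congr rfl fun a _ => sum_congr rfl fun r _ => ?_
  rw [← mul_one_div_pow_eq hk ht]
  split_ifs <;> ring

lemma neDist_eq_sum [DecidableEq σ] (ht : 0 < t) (j : Fin t) (x : σ) (z : W) :
    neDist f j x z = ∑ a, (if a j = x then 0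
      else (Fintype.card σ : ℝ) / (Fintype.card σ - 1)) * jointDist f (z, a) := by
  have hk : (Fintype.card σ : ℝ) ≠ 0 := Nat.cast_ne_zero.2 (Fintype.card_pos_iff.2 ⟨x⟩).ne'
  simp only [neDist, jointDist, mul_sum]
  refine sum_congr rfl fun a _ => sum_congr rfl fun r _ => ?_
  rw [← mul_one_div_pow_eq hk ht]
  split_ifs <;> ring

lemma eqDist_eq [DecidableEq σ] (ht : 0 < t) (j : Fin t) (x : σ) (z : W) :
    eqDist f j x z = Fintype.card σ * marginal (fun a => jointDist f (z, a)) j x := by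
  simp only [eqDist_eq_sum f ht, marginal, sum_filter, mul_sum, ite_mul, zero_mul, mul_ite,
    mul_zero]

lemma jointDist_le_outDist (z : W) (a : Fin t → σ) : jointDist f (z, a) ≤ outDist f z :=
  single_le_sum (fun b _ => jointDist_nonneg f z b) (mem_univ a)

lemma outDist_nonneg (z : W) : 0 ≤ outDist f z :=
  sum_nonneg fun a _ => jointDist_nonneg f z a

lemma eqDist_nonneg [DecidableEq σ] (ht : 0 < t) (j : Fin t) (x : σ) (z : W) :
    0 ≤ eqDist f j x z := by
  rw [eqDist_eq f ht]
  exact mul_nonneg (Nat.cast_nonneg _) (sum_nonneg fun a _ => jointDist_nonneg f z a)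

lemma neDist_nonneg [DecidableEq σ] (ht : 0 < t) (hσ : 1 < Fintype.card σ) (j : Fin t) (x : σ)
    (z : W) : 0 ≤ neDist f j x z := by
  have hk : (1 : ℝ) < Fintype.card σ := by exact_mod_cast hσ
  rw [neDist_eq_sum f ht]
  refine sum_nonneg fun a _ => mul_nonneg ?_ (jointDist_nonneg f z a)
  split_ifs
  · exact le_rfl
  · exact div_nonneg (by linarith) (by linarith)

lemma eqDist_le_card_mul_outDist [DecidableEq σ] (ht : 0 < t) (j : Fin t) (x : σ) (z : W) :
    eqDist f j x z ≤ Fintype.card σ * outDist f z := by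
  rw [eqDist_eq f ht, outDist_eq_sum_jointDist]
  gcongr
  exact sum_le_sum_of_subset_of_nonneg (filter_subset _ _) fun a _ _ => jointDist_nonneg f z a

/-- Law of total probability over the value of `X_j`. -/
lemma card_mul_outDist [DecidableEq σ] (ht : 0 < t) (hσ : 1 < Fintype.card σ) (j : Fin t)
    (x : σ) (z : W) : Fintype.card σ * outDist f z
      = (Fintype.card σ - 1) * neDist f j x z + eqDist f j x z := by
  have hk : (Fintype.card σ : ℝ) - 1 ≠ 0 := sub_ne_zero.2 (by exact_mod_cast hσ.ne')
  rw [neDist_eq_sum f ht, eqDist_eq_sum f ht, outDist_eq_sum_jointDist, mul_sum, mul_sum,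
    ← sum_add_distrib]
  refine sum_congr rfl fun a _ => ?_
  split_ifs
  · ring
  · field_simp
    ring

lemma sum_outDist [Fintype W] [Nonempty R] [Nonempty σ] : ∑ z, outDist f z = 1 := by
  have hk : (Fintype.card σ : ℝ) ≠ 0 := Nat.cast_ne_zero.2 Fintype.card_ne_zero
  simp only [outDist_eq_sum_jointDist]
  rw [sum_comm]
  simp only [sum_jointDist, sum_const, card_univ, Fintype.card_fun, Fintype.card_fin, nsmul_eq_mul]
  push_cast
  rw [← mul_pow, mul_one_div_cancel hk, one_pow]

lemma sum_eqDist [Fintype W] [Nonempty R] [DecidableEq σ] (ht : 0 < t) (j : Fin t) (x : σ) :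
    ∑ z, eqDist f j x z = 1 := by
  have hk : (Fintype.card σ : ℝ) ≠ 0 := Nat.cast_ne_zero.2 (Fintype.card_pos_iff.2 ⟨x⟩).ne'
  have hfiber : #{a : Fin t → σ | a j = x} = Fintype.card σ ^ (t - 1) := by
    simpa [Fintype.piFinset_univ] using
      Fintype.card_filter_piFinset_const_eq_of_mem (univ : Finset σ) j (mem_univ x)
  simp only [eqDist_eq f ht, ← mul_sum, marginal]
  rw [sum_comm]
  simp only [sum_jointDist, sum_const, hfiber, nsmul_eq_mul]
  push_cast
  rw [← mul_assoc, mul_pow_sub_one ht.ne', ← mul_pow, mul_one_div_cancel hk, one_pow]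

lemma sum_neDist [Fintype W] [Nonempty R] [DecidableEq σ] (ht : 0 < t) (hσ : 1 < Fintype.card σ)
    (j : Fin t) (x : σ) : ∑ z, neDist f j x z = 1 := by
  have hk : (Fintype.card σ : ℝ) - 1 ≠ 0 := sub_ne_zero.2 (by exact_mod_cast hσ.ne')
  have : Nonempty σ := ⟨x⟩
  have h := sum_congr rfl fun z (_ : z ∈ univ) => card_mul_outDist f ht hσ j x z
  rw [← mul_sum, sum_add_distrib, ← mul_sum, sum_outDist, sum_eqDist f ht] at h
  exact mul_left_cancel₀ hk (by linarith)

lemma statDist_neDist_outDist [Fintype W] [DecidableEq σ] (ht : 0 < t) (hσ : 1 < Fintype.card σ)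
    (j : Fin t) (x : σ) : statDist (neDist f j x) (outDist f)
      = statDist (neDist f j x) (eqDist f j x) / Fintype.card σ := by
  have hk : (0 : ℝ) < Fintype.card σ := by positivity
  have h : ∀ z, neDist f j x z - outDist f z
      = (neDist f j x z - eqDist f j x z) / Fintype.card σ := fun z => by
      rw [eq_div_iff hk.ne']
      linarith [card_mul_outDist f ht hσ j x z]
  simp only [statDist, h, abs_div, abs_of_pos hk, ← sum_div, mul_div_assoc]

section

variable [Fintype W] [Nonempty R]

/-- Mutual information is the relative entropy of the joint law to the product of the marginals. -/
lemma log_two_mul_miOut [Nonempty σ] : log 2 * miOut f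
    = ∑ z, relEntropy (fun a => jointDist f (z, a))
        fun _ => outDist f z / Fintype.card σ ^ t := by
  have hk : (0 : ℝ) < Fintype.card σ ^ t := by positivity
  have hunif : log 2 * entropyOf (fun _ : Fin t → σ => (1 / (Fintype.card σ : ℝ)) ^ t)
      = log (Fintype.card σ ^ t) := by
    rw [log_two_mul_entropyOf, sum_const, card_univ, Fintype.card_fun, Fintype.card_fin,
      nsmul_eq_mul, one_div_pow, ← mul_assoc, one_div, log_inv]
    push_cast
    rw [mul_inv_cancel₀ hk.ne']
    ring
  simp only [relEntropy,
    fun z a => mul_log_div_div (jointDist_nonneg f z a) (jointDist_le_outDist f z a) hk,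
    sum_add_distrib, sum_sub_distrib, ← sum_mul,
    ← outDist_eq_sum_jointDist, sum_outDist, one_mul]
  rw [miOut, mul_sub, mul_add, log_two_mul_entropyOf (outDist f), hunif,
    log_two_mul_entropyOf (jointDist f), Fintype.sum_prod_type]
  ring

/-- `∑ⱼ I(f(X) : Xⱼ) ≤ I(f(X) : X)`, in nats. -/
lemma sum_expect_relEntropy_eqDist_le [DecidableEq σ] [Nonempty σ] (ht : 0 < t) :
    ∑ j, 𝔼 x, relEntropy (eqDist f j x) (outDist f) ≤ log 2 * miOut f := by
  have hk : (Fintype.card σ : ℝ) ≠ 0 := Nat.cast_ne_zero.2 Fintype.card_ne_zero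
  have hj : ∀ j, 𝔼 x, relEntropy (eqDist f j x) (outDist f) = ∑ z,
      relEntropy (marginal (fun a => jointDist f (z, a)) j)
        fun _ => outDist f z / Fintype.card σ := by
    intro j
    rw [Fintype.expect_eq_sum_div_card, sum_div]
    simp only [relEntropy, eqDist_eq f ht, sum_div]
    rw [sum_comm]
    refine sum_congr rfl fun z _ => sum_congr rfl fun x _ => ?_
    rw [mul_assoc, mul_div_cancel_left₀ _ hk, div_div_eq_mul_div,
      mul_comm _ (Fintype.card σ : ℝ)]
  rw [sum_congr rfl fun j _ => hj j, sum_comm, log_two_mul_miOut]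
  refine sum_le_sum fun z _ => ?_
  have h := sum_relEntropy_marginal_le (jointDist_nonneg f z)
  rwa [Fintype.card_fin, ← outDist_eq_sum_jointDist] at h

lemma statDist_neDist_eqDist_le [DecidableEq σ] (ht : 0 < t) (hσ : 1 < Fintype.card σ)
    (j : Fin t) (x : σ) :
    statDist (neDist f j x) (eqDist f j x)
      ≤ 1 / Fintype.card σ + (1 - exp (-1 - relEntropy (eqDist f j x) (outDist f))) := by
  have : Nonempty σ := ⟨x⟩
  have hk : (0 : ℝ) < Fintype.card σ := Nat.cast_pos.2 Fintype.card_pos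
  have habs : ∀ z, outDist f z = 0 → eqDist f j x z = 0 := fun z hz =>
    le_antisymm (by simpa [hz] using eqDist_le_card_mul_outDist f ht j x z)
      (eqDist_nonneg f ht j x z)
  calc statDist (neDist f j x) (eqDist f j x)
      ≤ statDist (neDist f j x) (outDist f) + statDist (eqDist f j x) (outDist f) := by
        rw [statDist_comm (eqDist f j x)]
        exact statDist_triangle _ _ _
    _ ≤ 1 / Fintype.card σ + (1 - exp (-1 - relEntropy (eqDist f j x) (outDist f))) := by
        gcongr
        · rw [statDist_neDist_outDist f ht hσ]
          gcongr
          exact statDist_le_one (neDist_nonneg f ht hσ j x) (eqDist_nonneg f ht j x)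
            (sum_neDist f ht hσ j x) (sum_eqDist f ht j x)
        · exact statDist_le_one_sub_exp_relEntropy (eqDist_nonneg f ht j x) (outDist_nonneg f)
            (sum_eqDist f ht j x) (sum_outDist f) habs

lemma expect_expect_relEntropy_eqDist_le [DecidableEq σ] [Nonempty σ] (ht : 0 < t) {C : ℝ}
    (hC : 0 ≤ C) (hI : miOut f ≤ C * t * logb 2 t) :
    𝔼 j, 𝔼 x, relEntropy (eqDist f j x) (outDist f) ≤ C * logb 2 t := by
  have ht' : (1 : ℝ) ≤ t := by exact_mod_cast ht
  calc 𝔼 j, 𝔼 x, relEntropy (eqDist f j x) (outDist f)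
      = (∑ j, 𝔼 x, relEntropy (eqDist f j x) (outDist f)) / t := by
        rw [Fintype.expect_eq_sum_div_card, Fintype.card_fin]
    _ ≤ log 2 * (C * t * logb 2 t) / t := by
        gcongr
        exact (sum_expect_relEntropy_eqDist_le f ht).trans
          (mul_le_mul_of_nonneg_left hI (log_pos one_lt_two).le)
    _ = C * log t := by
        rw [← log_div_log]
        field_simp
    _ ≤ C * logb 2 t := by
        gcongr
        exact le_div_self (log_nonneg ht') (log_pos one_lt_two) (by linarith [log_two_lt_d9])

end

end

/-- For independent uniform `X₁,…,X_t` on `σ` and a randomized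
mapping `f` with `I(f(X):X) ≤ C·t·log t`, the average over uniform `j ∈ [t]` and
uniform `x ∈ σ` of `d(f(X|_{X_j≠x}), f(X|_{X_j=x}))` is at most
`1 − e^{−1−C log t} + 1/|σ|`. -/
theorem avg_statDist_ne_eq_le {σ W R : Type*} [Fintype σ] [Fintype W] [Fintype R]
    [DecidableEq σ] [DecidableEq W] [Nonempty R]
    (t : ℕ) (ht : 0 < t) (hσ : 2 ≤ Fintype.card σ) (C : ℝ) (hC : 0 < C)
    (f : (Fin t → σ) → R → W)
    (hI : miOut f ≤ C * t * Real.logb 2 t) :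
    (1 / t : ℝ) * ∑ j : Fin t,
        (1 / (Fintype.card σ : ℝ)) * ∑ x : σ, statDist (neDist f j x) (eqDist f j x)
      ≤ 1 - Real.exp (-1 - C * Real.logb 2 t) + 1 / (Fintype.card σ : ℝ) := by
  have : Nonempty (Fin t) := ⟨⟨0, ht⟩⟩
  have : Nonempty σ := Fintype.card_pos_iff.1 (by omega)
  set D : Fin t → σ → ℝ := fun j x => relEntropy (eqDist f j x) (outDist f)
  have hD : 𝔼 j, 𝔼 x, D j x ≤ C * logb 2 t :=
    expect_expect_relEntropy_eqDist_le f ht hC.le hI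
  have hLHS : (1 / t : ℝ) * ∑ j : Fin t,
      (1 / (Fintype.card σ : ℝ)) * ∑ x : σ, statDist (neDist f j x) (eqDist f j x)
        = 𝔼 j, 𝔼 x, statDist (neDist f j x) (eqDist f j x) := by
    simp only [Fintype.expect_eq_sum_div_card, Fintype.card_fin, one_div_mul_eq_div]
  rw [hLHS]
  calc 𝔼 j, 𝔼 x, statDist (neDist f j x) (eqDist f j x)
      ≤ 𝔼 j, 𝔼 x, (1 / (Fintype.card σ : ℝ) + (1 - exp (-1 - D j x))) :=
        expect_le_expect fun j _ => expect_le_expect fun x _ =>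
          statDist_neDist_eqDist_le f ht hσ j x
    _ = 1 / (Fintype.card σ : ℝ) + 𝔼 j, 𝔼 x, (1 - exp (-1 - D j x)) := by
        simp only [expect_add_distrib, Fintype.expect_const]
    _ ≤ 1 / (Fintype.card σ : ℝ) + (1 - exp (-1 - 𝔼 j, 𝔼 x, D j x)) := by
        gcongr
        exact (expect_le_expect fun j _ => expect_one_sub_exp_le _).trans (expect_one_sub_exp_le _)
    _ ≤ 1 - exp (-1 - C * logb 2 t) + 1 / (Fintype.card σ : ℝ) := by
        linarith [exp_le_exp.2 (show -1 - C * logb 2 t ≤ -1 - 𝔼 j, 𝔼 x, D j x by linarith)]
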